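/- arXiv:1302.2417 — 3 statements merged into one kernel-verified Lean document; each statement's English description precedes it below -/
import Mathlib

section
/- Let α ≥ 0 and 1 < p < ∞. If g ∈ X^p_α, then g ∈ 𝒟_α; more precisely ∫_𝔻 |g'|² dA_α ≤ C ‖g‖_{X^p_α}² for a constant C = C(p,α). -/
open MeasureTheory Metric Complex ENNReal

/-- The open unit disk in `ℂ`. -/
def unitDisk : Set ℂ := Metric.ball (0 : ℂ) 1

/-- Normalized area measure `dA = (1/π) dx dy` on `ℂ`. -/
noncomputable def mA : Measure ℂ := (ENNReal.ofReal Real.pi)⁻¹ • volume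

/-- The `p`-th power of the `X^p_α` norm:
`‖g‖_{X^p_α}^p = |g(0)|^p + ∫_𝔻 ((1-|w|²)^α ∫_𝔻 |g'(z)|² dA_α(z)/|1-conj(w)z|^{2+2α})^{p/2}
(1-|w|²)^{p-2} dA(w)`, valued in `[0,∞]`. -/
noncomputable def XnormE (p α : ℝ) (g : ℂ → ℂ) : ℝ≥0∞ :=
  ENNReal.ofReal (‖g 0‖ ^ p) +
    ∫⁻ w in unitDisk,
      (ENNReal.ofReal ((1 - ‖w‖ ^ 2) ^ α) *
        ∫⁻ z in unitDisk,
          ENNReal.ofReal (‖deriv g z‖ ^ 2 * ((α + 1) * (1 - ‖z‖ ^ 2) ^ α) /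
            ‖1 - (starRingEnd ℂ) w * z‖ ^ (2 + 2 * α)) ∂mA) ^ (p / 2) *
      ENNReal.ofReal ((1 - ‖w‖ ^ 2) ^ (p - 2)) ∂mA

lemma aux_inner (α : ℝ) (hα : 0 ≤ α) (g : ℂ → ℂ) (w : ℂ) (hw : w ∈ unitDisk) :
    ENNReal.ofReal (((2:ℝ) ^ (2 + 2*α))⁻¹) *
      ∫⁻ z in unitDisk,
        ENNReal.ofReal (‖deriv g z‖ ^ 2 * ((α + 1) * (1 - ‖z‖ ^ 2) ^ α)) ∂mA ≤
    ∫⁻ z in unitDisk,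
      ENNReal.ofReal (‖deriv g z‖ ^ 2 * ((α + 1) * (1 - ‖z‖ ^ 2) ^ α) /
        ‖1 - (starRingEnd ℂ) w * z‖ ^ (2 + 2 * α)) ∂mA := by
  rw [← lintegral_const_mul' _ _ ENNReal.ofReal_ne_top]
  apply setLIntegral_mono' measurableSet_ball
  intro z hz
  have hz1 : ‖z‖ < 1 := by simpa [unitDisk, dist_zero_right] using hz
  have hw1 : ‖w‖ < 1 := by simpa [unitDisk, dist_zero_right] using hw
  have hwz : ‖(starRingEnd ℂ) w * z‖ < 1 := by
    rw [norm_mul, RCLike.norm_conj]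
    nlinarith [norm_nonneg w, norm_nonneg z]
  have hne : (1 : ℂ) - (starRingEnd ℂ) w * z ≠ 0 := by
    intro h
    have : (starRingEnd ℂ) w * z = 1 := by linear_combination -h
    rw [this] at hwz; simp at hwz
  have htpos : 0 < ‖1 - (starRingEnd ℂ) w * z‖ ^ (2 + 2 * α) :=
    Real.rpow_pos_of_pos (norm_pos_iff.mpr hne) _
  have ht2 : ‖1 - (starRingEnd ℂ) w * z‖ ^ (2 + 2 * α) ≤ (2:ℝ) ^ (2 + 2*α) := by
    apply Real.rpow_le_rpow (norm_nonneg _) _ (by linarith)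
    calc ‖1 - (starRingEnd ℂ) w * z‖ ≤ ‖(1:ℂ)‖ + ‖(starRingEnd ℂ) w * z‖ := norm_sub_le _ _
      _ ≤ 1 + 1 := by rw [norm_one]; linarith
      _ = 2 := by norm_num
  have hf : 0 ≤ ‖deriv g z‖ ^ 2 * ((α + 1) * (1 - ‖z‖ ^ 2) ^ α) := by
    apply mul_nonneg (by positivity)
    apply mul_nonneg (by linarith)
    exact Real.rpow_nonneg (by nlinarith [norm_nonneg z]) α
  rw [← ENNReal.ofReal_mul (by positivity)]
  apply ENNReal.ofReal_le_ofReal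
  rw [inv_mul_eq_div]
  gcongr

/-- Let `α ≥ 0`, `1 < p < ∞`. If `g ∈ X^p_α` then `g ∈ 𝒟_α`:
`∫_𝔻 |g'|² dA_α ≤ C ‖g‖_{X^p_α}²` with `C = C(p,α)`. -/
theorem stmt9 (α p : ℝ) (hα : 0 ≤ α) (hp : 1 < p) :
    ∃ C : ℝ≥0∞, C ≠ ⊤ ∧ ∀ g : ℂ → ℂ, DifferentiableOn ℂ g unitDisk →
      (∫⁻ z in unitDisk,
          ENNReal.ofReal (‖deriv g z‖ ^ 2 * ((α + 1) * (1 - ‖z‖ ^ 2) ^ α)) ∂mA) ≤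
        C * (XnormE p α g) ^ (2 / p) := by
  set c1 : ℝ := ((2:ℝ) ^ (2 + 2*α))⁻¹ with hc1def
  have hc1 : 0 < c1 := by positivity
  set c2 : ℝ := ((3:ℝ)/4) ^ α with hc2def
  have hc2 : 0 < c2 := Real.rpow_pos_of_pos (by norm_num) α
  set m : ℝ := min (((3:ℝ)/4) ^ (p - 2)) 1 with hmdef
  have hm : 0 < m := lt_min (Real.rpow_pos_of_pos (by norm_num) _) one_pos
  set μB : ℝ≥0∞ := mA (ball (0:ℂ) (1/2)) with hμBdef
  have hμB0 : μB ≠ 0 := by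
    rw [hμBdef, mA, Measure.smul_apply, smul_eq_mul]
    exact mul_ne_zero (ENNReal.inv_ne_zero.mpr ENNReal.ofReal_ne_top)
      (measure_ball_pos volume 0 (by norm_num)).ne'
  have hμBt : μB ≠ ⊤ := by
    rw [hμBdef, mA, Measure.smul_apply, smul_eq_mul]
    exact ENNReal.mul_ne_top (ENNReal.inv_ne_top.mpr
      (ENNReal.ofReal_pos.mpr Real.pi_pos).ne') measure_ball_lt_top.ne
  set K : ℝ≥0∞ := ENNReal.ofReal (c2 * c1) ^ (p/2) * ENNReal.ofReal m * μB with hKdef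
  have hK0 : K ≠ 0 := by
    rw [hKdef]
    refine mul_ne_zero (mul_ne_zero ?_ ?_) hμB0
    · exact (ENNReal.rpow_pos (ENNReal.ofReal_pos.mpr (by positivity)) ENNReal.ofReal_ne_top).ne'
    · exact (ENNReal.ofReal_pos.mpr hm).ne'
  have hKt : K ≠ ⊤ := by
    rw [hKdef]
    exact ENNReal.mul_ne_top (ENNReal.mul_ne_top
      (ENNReal.rpow_ne_top_of_nonneg (by positivity) ENNReal.ofReal_ne_top)
      ENNReal.ofReal_ne_top) hμBt
  refine ⟨(K⁻¹) ^ (2/p), ENNReal.rpow_ne_top_of_nonneg (by positivity)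
    (ENNReal.inv_ne_top.mpr hK0), fun g _ => ?_⟩
  set D : ℝ≥0∞ := ∫⁻ z in unitDisk,
      ENNReal.ofReal (‖deriv g z‖ ^ 2 * ((α + 1) * (1 - ‖z‖ ^ 2) ^ α)) ∂mA with hDdef
  -- key lower bound on the X norm
  have key : K * D ^ (p/2) ≤ XnormE p α g := by
    have step1 : ∀ w ∈ ball (0:ℂ) (1/2),
        (ENNReal.ofReal (c2 * c1) * D) ^ (p/2) * ENNReal.ofReal m ≤
        (ENNReal.ofReal ((1 - ‖w‖ ^ 2) ^ α) *
          ∫⁻ z in unitDisk,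
            ENNReal.ofReal (‖deriv g z‖ ^ 2 * ((α + 1) * (1 - ‖z‖ ^ 2) ^ α) /
              ‖1 - (starRingEnd ℂ) w * z‖ ^ (2 + 2 * α)) ∂mA) ^ (p / 2) *
          ENNReal.ofReal ((1 - ‖w‖ ^ 2) ^ (p - 2)) := by
      intro w hw
      have hw2 : ‖w‖ < 1/2 := by simpa [dist_zero_right] using hw
      have hw1 : w ∈ unitDisk := by
        simp only [unitDisk, mem_ball, dist_zero_right]; linarith
      have h34 : (3:ℝ)/4 ≤ 1 - ‖w‖ ^ 2 := by nlinarith [norm_nonneg w]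
      have hle1 : 1 - ‖w‖ ^ 2 ≤ 1 := by nlinarith [norm_nonneg w]
      refine mul_le_mul' (ENNReal.rpow_le_rpow ?_ (by positivity)) ?_
      · rw [ENNReal.ofReal_mul hc2.le, mul_assoc]
        exact mul_le_mul' (ENNReal.ofReal_le_ofReal
          (Real.rpow_le_rpow (by norm_num) h34 hα)) (aux_inner α hα g w hw1)
      · apply ENNReal.ofReal_le_ofReal
        rcases le_or_gt 2 p with h2p | h2p
        · exact le_trans (min_le_left _ _) (Real.rpow_le_rpow (by norm_num) h34 (by linarith))
        · refine le_trans (min_le_right _ _) ?_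
          exact Real.one_le_rpow_of_pos_of_le_one_of_nonpos (by linarith) hle1 (by linarith)
    calc K * D ^ (p/2)
        = ((ENNReal.ofReal (c2 * c1) * D) ^ (p/2) * ENNReal.ofReal m) * μB := by
          rw [hKdef, ENNReal.mul_rpow_of_nonneg _ _ (by positivity : (0:ℝ) ≤ p/2)]; ring
      _ = ∫⁻ _ in ball (0:ℂ) (1/2),
            (ENNReal.ofReal (c2 * c1) * D) ^ (p/2) * ENNReal.ofReal m ∂mA := by
          rw [setLIntegral_const]
      _ ≤ ∫⁻ w in ball (0:ℂ) (1/2),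
            (ENNReal.ofReal ((1 - ‖w‖ ^ 2) ^ α) *
              ∫⁻ z in unitDisk,
                ENNReal.ofReal (‖deriv g z‖ ^ 2 * ((α + 1) * (1 - ‖z‖ ^ 2) ^ α) /
                  ‖1 - (starRingEnd ℂ) w * z‖ ^ (2 + 2 * α)) ∂mA) ^ (p / 2) *
            ENNReal.ofReal ((1 - ‖w‖ ^ 2) ^ (p - 2)) ∂mA :=
          setLIntegral_mono' measurableSet_ball step1
      _ ≤ ∫⁻ w in unitDisk,
            (ENNReal.ofReal ((1 - ‖w‖ ^ 2) ^ α) *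
              ∫⁻ z in unitDisk,
                ENNReal.ofReal (‖deriv g z‖ ^ 2 * ((α + 1) * (1 - ‖z‖ ^ 2) ^ α) /
                  ‖1 - (starRingEnd ℂ) w * z‖ ^ (2 + 2 * α)) ∂mA) ^ (p / 2) *
            ENNReal.ofReal ((1 - ‖w‖ ^ 2) ^ (p - 2)) ∂mA :=
          lintegral_mono_set (ball_subset_ball (by norm_num))
      _ ≤ XnormE p α g := le_add_self
  -- extract D
  have hp0 : (0:ℝ) < p := by linarith
  have hDK : D ^ (p/2) ≤ XnormE p α g / K :=
    (ENNReal.le_div_iff_mul_le (Or.inl hK0) (Or.inl hKt)).mpr (by rwa [mul_comm])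
  calc D = (D ^ (p/2)) ^ (2/p) := by
        rw [← ENNReal.rpow_mul]
        rw [show p/2 * (2/p) = 1 by field_simp, ENNReal.rpow_one]
    _ ≤ (XnormE p α g / K) ^ (2/p) := ENNReal.rpow_le_rpow hDK (by positivity)
    _ = (K⁻¹) ^ (2/p) * XnormE p α g ^ (2/p) := by
        rw [div_eq_mul_inv, ENNReal.mul_rpow_of_nonneg _ _ (by positivity : (0:ℝ) ≤ 2/p)]
        ring
end

section
/- Let α ≥ 0 and 1 < p < ∞. If g ∈ X^p_α then g belongs to the Besov space B_p, that is, ∫_𝔻 |g'(z)|^p (1-|z|²)^{p-2} dA(z) ≤ C ‖g‖_{X^p_α}^p. -/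
open MeasureTheory Metric Complex ENNReal

/-!
Fix `w ∈ 𝔻` and put `R = (1 - |w|) / 2`. On the disk `D(w) = B(w, R) ⊆ 𝔻` we have
`R ≤ 1 - |w|²`, `R < 1 - |z|²` and `|1 - w̄ z| ≤ 5R`, so the weighted kernel of `X^p_α` at `w`,
multiplied by `(1 - |w|²)^α`, is at least `(25^(1+α) R²)⁻¹` there. The mean value property of the
holomorphic `f²` makes `|f|²` sub-mean-valued on circles, hence, in polar coordinates, on `D(w)`:
`R² |f w|² ≤ ∫_{D(w)} |f|² dA`. With `f = g'` this gives `|g'(w)|² ≤ 25^(1+α) (1 - |w|²)^α I(w)`,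
`I(w)` the inner integral of `‖g‖_{X^p_α}^p`; raise it to the power `p / 2` and integrate against
`(1 - |w|²)^(p - 2) dA(w)`.
-/

open Set Real

theorem norm_circleAverage_le {E : Type*} [NormedAddCommGroup E] [NormedSpace ℝ E]
    (f : ℂ → E) (c : ℂ) (r : ℝ) :
    ‖circleAverage f c r‖ ≤ circleAverage (fun z ↦ ‖f z‖) c r := by
  simp only [circleAverage_def, norm_smul, smul_eq_mul, norm_inv, norm_mul, Real.norm_ofNat,
    Real.norm_of_nonneg pi_pos.le]
  gcongr
  exact intervalIntegral.norm_integral_le_integral_norm two_pi_pos.le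

theorem DiffContOnCl.sq_norm_le_circleAverage {f : ℂ → ℂ} {c : ℂ} {r : ℝ}
    (hf : DiffContOnCl ℂ f (ball c |r|)) :
    ‖f c‖ ^ 2 ≤ Real.circleAverage (fun z ↦ ‖f z‖ ^ 2) c r := by
  have hmean : Real.circleAverage (fun z ↦ f z • f z) c r = f c • f c := (hf.smul hf).circleAverage
  simp only [smul_eq_mul] at hmean
  simpa [hmean, sq] using norm_circleAverage_le (fun z ↦ f z * f z) c r

theorem ofReal_two_pi_mul_circleAverage {h : ℂ → ℝ} {c : ℂ} {r : ℝ}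
    (hh : ContinuousOn h (sphere c |r|)) (h0 : ∀ z, 0 ≤ h z) :
    ENNReal.ofReal (2 * π * circleAverage h c r) =
      ∫⁻ θ in Ioo (-π) π, ENNReal.ofReal (h (circleMap c r θ)) := by
  have hcont : Continuous fun θ ↦ h (circleMap c r θ) :=
    hh.comp_continuous (continuous_circleMap c r) (circleMap_mem_sphere' c r)
  have hint : IntegrableOn (fun θ ↦ h (circleMap c r θ)) (Ioo (-π) π) :=
    (hcont.integrableOn_Icc).mono_set Ioo_subset_Icc_self
  rw [← ofReal_integral_eq_lintegral_ofReal hint (Filter.Eventually.of_forall fun θ ↦ h0 _),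
    circleAverage_eq_integral_add (-π), smul_eq_mul, ← mul_assoc,
    mul_inv_cancel₀ two_pi_pos.ne', one_mul,
    intervalIntegral.integral_comp_add_right (fun θ ↦ h (circleMap c r θ)),
    intervalIntegral.integral_of_le (by linarith [pi_pos]), integral_Ioc_eq_integral_Ioo]
  ring_nf

theorem lintegral_ball_eq_setLIntegral_polar (F : ℂ → ℝ≥0∞) (c : ℂ) (R : ℝ) :
    ∫⁻ z in ball c R, F z =
      ∫⁻ p in Ioo 0 R ×ˢ Ioo (-π) π, ENNReal.ofReal p.1 * F (circleMap c p.1 p.2) := by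
  have hS : MeasurableSet (Ioo (0 : ℝ) R ×ˢ Ioo (-π) π) := measurableSet_Ioo.prod measurableSet_Ioo
  rw [← lintegral_indicator measurableSet_ball, ← lintegral_add_left_eq_self _ c,
    ← Complex.lintegral_comp_polarCoord_symm, ← lintegral_indicator hS,
    ← lintegral_indicator polarCoord.open_target.measurableSet]
  refine lintegral_congr fun p ↦ ?_
  have hp : circleMap c p.1 p.2 = c + p.1 * (Complex.cos p.2 + Complex.sin p.2 * I) := by
    simp [circleMap, Complex.exp_mul_I]
  by_cases h1 : 0 < p.1 <;> by_cases h2 : p.2 ∈ Ioo (-π) π <;> by_cases h3 : p.1 < R <;>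
    simp [indicator, hp, h1, h2, h3, abs_of_pos, mem_ball]

theorem ofReal_pi_mul_sq_eq_setLIntegral {R : ℝ} (hR : 0 ≤ R) (a : ℝ) (ha : 0 ≤ a) :
    ENNReal.ofReal (π * R ^ 2 * a) = ∫⁻ r in Ioo 0 R, ENNReal.ofReal (2 * π * a * r) := by
  have hint : IntegrableOn (fun r : ℝ ↦ 2 * π * a * r) (Ioo 0 R) :=
    (Continuous.integrableOn_Icc (by fun_prop)).mono_set Ioo_subset_Icc_self
  rw [← ofReal_integral_eq_lintegral_ofReal hint
    ((ae_restrict_iff' measurableSet_Ioo).2 (Filter.Eventually.of_forall fun r hr ↦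
      by have := hr.1.le; positivity)),
    ← integral_Ioc_eq_integral_Ioo, ← intervalIntegral.integral_of_le hR,
    intervalIntegral.integral_const_mul, integral_id]
  ring_nf

theorem DifferentiableOn.ofReal_pi_mul_sq_mul_sq_norm_le_setLIntegral {f : ℂ → ℂ} {c : ℂ} {R : ℝ}
    (hR : 0 ≤ R) (hf : DifferentiableOn ℂ f (ball c R)) :
    ENNReal.ofReal (π * R ^ 2 * ‖f c‖ ^ 2) ≤ ∫⁻ z in ball c R, ENNReal.ofReal (‖f z‖ ^ 2) := by
  have hS : MeasurableSet (Ioo (0 : ℝ) R ×ˢ Ioo (-π) π) := measurableSet_Ioo.prod measurableSet_Ioo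
  have hmaps : MapsTo (fun p : ℝ × ℝ ↦ circleMap c p.1 p.2) (Ioo 0 R ×ˢ Ioo (-π) π) (ball c R) :=
    fun p hp ↦ by simpa [Complex.dist_eq, abs_of_pos hp.1.1] using hp.1.2
  have hmeas : AEMeasurable (fun p : ℝ × ℝ ↦ ENNReal.ofReal p.1 *
      ENNReal.ofReal (‖f (circleMap c p.1 p.2)‖ ^ 2))
      (volume.restrict (Ioo 0 R ×ˢ Ioo (-π) π)) := by
    have hcirc : Continuous fun p : ℝ × ℝ ↦ circleMap c p.1 p.2 := by
      simp only [circleMap]; fun_prop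
    exact measurable_fst.ennreal_ofReal.aemeasurable.mul <| ContinuousOn.aemeasurable
      (ENNReal.continuous_ofReal.comp_continuousOn
        ((hf.continuousOn.comp hcirc.continuousOn hmaps).norm.pow 2)) hS
  rw [lintegral_ball_eq_setLIntegral_polar, Measure.volume_eq_prod, setLIntegral_prod _ hmeas,
    ofReal_pi_mul_sq_eq_setLIntegral hR _ (by positivity)]
  refine setLIntegral_mono' measurableSet_Ioo fun r hr ↦ ?_
  have hdiff : DiffContOnCl ℂ f (ball c |r|) := by
    rw [abs_of_pos hr.1]
    exact hf.diffContOnCl_ball (closedBall_subset_ball hr.2)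
  have hcont : ContinuousOn (fun z ↦ ‖f z‖ ^ 2) (sphere c |r|) :=
    (hdiff.continuousOn_ball.norm.pow 2).mono sphere_subset_closedBall
  dsimp only
  rw [lintegral_const_mul' _ _ ofReal_ne_top,
    ← ofReal_two_pi_mul_circleAverage hcont fun z ↦ by positivity, ← ofReal_mul hr.1.le]
  gcongr ENNReal.ofReal ?_
  have h2πr : 0 ≤ 2 * π * r := by have := hr.1; positivity
  have := mul_le_mul_of_nonneg_left hdiff.sq_norm_le_circleAverage h2πr
  linarith

theorem DifferentiableOn.ofReal_sq_mul_sq_norm_le_setLIntegral_mA {f : ℂ → ℂ} {c : ℂ} {R : ℝ}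
    (hR : 0 ≤ R) (hf : DifferentiableOn ℂ f (ball c R)) :
    ENNReal.ofReal (R ^ 2 * ‖f c‖ ^ 2) ≤ ∫⁻ z in ball c R, ENNReal.ofReal (‖f z‖ ^ 2) ∂mA := by
  have hπ : ENNReal.ofReal π ≠ 0 := (ENNReal.ofReal_pos.2 pi_pos).ne'
  calc ENNReal.ofReal (R ^ 2 * ‖f c‖ ^ 2)
      = (ENNReal.ofReal π)⁻¹ * ENNReal.ofReal (π * R ^ 2 * ‖f c‖ ^ 2) := by
        rw [mul_assoc π, ENNReal.ofReal_mul pi_pos.le, ← mul_assoc,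
          ENNReal.inv_mul_cancel hπ ofReal_ne_top, one_mul]
    _ ≤ (ENNReal.ofReal π)⁻¹ * ∫⁻ z in ball c R, ENNReal.ofReal (‖f z‖ ^ 2) := by
        gcongr
        exact hf.ofReal_pi_mul_sq_mul_sq_norm_le_setLIntegral hR
    _ = ∫⁻ z in ball c R, ENNReal.ofReal (‖f z‖ ^ 2) ∂mA := by
        simp only [mA, Measure.restrict_smul, lintegral_smul_measure, smul_eq_mul]

section

variable {w z : ℂ}

theorem norm_lt_one_sub_of_mem_ball (hz : z ∈ ball w ((1 - ‖w‖) / 2)) :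
    ‖z‖ < 1 - (1 - ‖w‖) / 2 := by
  rw [mem_ball, dist_eq_norm] at hz
  have := norm_le_norm_add_norm_sub' z w
  linarith

theorem one_sub_norm_div_two_lt_one_sub_sq_norm (hz : z ∈ ball w ((1 - ‖w‖) / 2)) :
    (1 - ‖w‖) / 2 < 1 - ‖z‖ ^ 2 := by
  have := norm_lt_one_sub_of_mem_ball hz
  have : 0 < (1 - ‖w‖) / 2 := pos_of_mem_ball hz
  nlinarith [norm_nonneg z]

theorem norm_one_sub_conj_mul_le (hz : z ∈ ball w ((1 - ‖w‖) / 2)) :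
    ‖1 - starRingEnd ℂ w * z‖ ≤ 5 * ((1 - ‖w‖) / 2) := by
  have hR : 0 < (1 - ‖w‖) / 2 := pos_of_mem_ball hz
  rw [mem_ball, dist_eq_norm] at hz
  have hsplit : 1 - starRingEnd ℂ w * z = ((1 - ‖w‖ ^ 2 : ℝ) : ℂ) + starRingEnd ℂ w * (w - z) := by
    rw [mul_sub, mul_comm _ w, Complex.mul_conj, Complex.normSq_eq_norm_sq]
    push_cast
    ring
  calc ‖1 - starRingEnd ℂ w * z‖
      ≤ |1 - ‖w‖ ^ 2| + ‖w‖ * ‖z - w‖ := by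
        rw [hsplit]
        refine (norm_add_le _ _).trans_eq ?_
        rw [Complex.norm_real, Real.norm_eq_abs, norm_mul, Complex.norm_conj, norm_sub_rev]
    _ ≤ 5 * ((1 - ‖w‖) / 2) := by
        rw [abs_of_nonneg (by nlinarith [norm_nonneg w])]
        nlinarith [norm_nonneg w, norm_nonneg (z - w)]

theorem norm_one_sub_conj_mul_pos (hw : ‖w‖ ≤ 1) (hz : ‖z‖ < 1) :
    0 < ‖1 - starRingEnd ℂ w * z‖ := by
  refine norm_pos_iff.2 (sub_ne_zero.2 fun h ↦ ?_)
  have : ‖starRingEnd ℂ w * z‖ < 1 := by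
    rw [norm_mul, Complex.norm_conj]
    nlinarith [norm_nonneg z, norm_nonneg w]
  simp [← h] at this

end

theorem le_weighted_kernel_of_mem_ball {α : ℝ} (hα : 0 ≤ α) {w z : ℂ}
    (hz : z ∈ ball w ((1 - ‖w‖) / 2)) :
    (25 ^ (1 + α) * ((1 - ‖w‖) / 2) ^ 2)⁻¹ ≤
      (1 - ‖w‖ ^ 2) ^ α *
        ((α + 1) * (1 - ‖z‖ ^ 2) ^ α / ‖1 - starRingEnd ℂ w * z‖ ^ (2 + 2 * α)) := by
  set R := (1 - ‖w‖) / 2 with hRdef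
  have hR : 0 < R := pos_of_mem_ball hz
  have hRa : R ≤ 1 - ‖w‖ ^ 2 := by nlinarith [norm_nonneg w]
  have hRb : R < 1 - ‖z‖ ^ 2 := one_sub_norm_div_two_lt_one_sub_sq_norm hz
  have hD : 0 < ‖1 - starRingEnd ℂ w * z‖ :=
    norm_one_sub_conj_mul_pos (by linarith) (by linarith [norm_lt_one_sub_of_mem_ball hz])
  have ha : 0 ≤ 1 - ‖w‖ ^ 2 := by linarith
  have hb : 0 ≤ 1 - ‖z‖ ^ 2 := by linarith
  have hab : (R ^ 2) ^ α ≤ (1 - ‖w‖ ^ 2) ^ α * (1 - ‖z‖ ^ 2) ^ α := by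
    rw [← Real.mul_rpow ha hb, sq]
    gcongr
  have hDpow : ‖1 - starRingEnd ℂ w * z‖ ^ (2 + 2 * α) ≤ 25 ^ (1 + α) * R ^ 2 * (R ^ 2) ^ α :=
    calc ‖1 - starRingEnd ℂ w * z‖ ^ (2 + 2 * α)
        = (‖1 - starRingEnd ℂ w * z‖ ^ 2) ^ (1 + α) := by
          rw [← Real.rpow_natCast, ← Real.rpow_mul hD.le]
          ring_nf
      _ ≤ (25 * R ^ 2) ^ (1 + α) := by
          gcongr
          nlinarith [norm_one_sub_conj_mul_le hz]
      _ = 25 ^ (1 + α) * R ^ 2 * (R ^ 2) ^ α := by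
          rw [Real.mul_rpow (by norm_num) (by positivity), Real.rpow_add (pow_pos hR 2) 1 α,
            Real.rpow_one, mul_assoc]
  calc (25 ^ (1 + α) * R ^ 2)⁻¹ = (R ^ 2) ^ α / (25 ^ (1 + α) * R ^ 2 * (R ^ 2) ^ α) := by
        field_simp
    _ ≤ (1 - ‖w‖ ^ 2) ^ α * (1 - ‖z‖ ^ 2) ^ α / ‖1 - starRingEnd ℂ w * z‖ ^ (2 + 2 * α) :=
        div_le_div₀ (by positivity) hab (by positivity) hDpow
    _ ≤ _ := by
        rw [mul_div_assoc]
        gcongr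
        exact le_mul_of_one_le_left (by positivity) (by linarith)

theorem DifferentiableOn.ofReal_sq_norm_le_weighted_lintegral {f : ℂ → ℂ}
    (hf : DifferentiableOn ℂ f unitDisk) {α : ℝ} (hα : 0 ≤ α) {w : ℂ} (hw : w ∈ unitDisk) :
    ENNReal.ofReal (‖f w‖ ^ 2) ≤ ENNReal.ofReal (25 ^ (1 + α)) *
      (ENNReal.ofReal ((1 - ‖w‖ ^ 2) ^ α) *
        ∫⁻ z in unitDisk, ENNReal.ofReal (‖f z‖ ^ 2 * ((α + 1) * (1 - ‖z‖ ^ 2) ^ α) /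
          ‖1 - (starRingEnd ℂ) w * z‖ ^ (2 + 2 * α)) ∂mA) := by
  rw [unitDisk, mem_ball_zero_iff] at hw
  set R := (1 - ‖w‖) / 2 with hRdef
  set K : ℝ := 25 ^ (1 + α)
  have hR : 0 < R := by linarith
  have hK : 0 < K := by positivity
  have hball : ball w R ⊆ unitDisk := fun z hz ↦
    mem_ball_zero_iff.2 ((norm_lt_one_sub_of_mem_ball hz).trans_le (by linarith))
  have hweight : 0 ≤ (1 - ‖w‖ ^ 2) ^ α := Real.rpow_nonneg (by nlinarith [norm_nonneg w]) α
  calc ENNReal.ofReal (‖f w‖ ^ 2)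
      = ENNReal.ofReal K * (ENNReal.ofReal (K * R ^ 2)⁻¹ * ENNReal.ofReal (R ^ 2 * ‖f w‖ ^ 2)) := by
        rw [← ofReal_mul (by positivity), ← ofReal_mul (by positivity)]
        congr 1
        field_simp
    _ ≤ ENNReal.ofReal K * (ENNReal.ofReal (K * R ^ 2)⁻¹ *
          ∫⁻ z in ball w R, ENNReal.ofReal (‖f z‖ ^ 2) ∂mA) := by
        gcongr
        exact (hf.mono hball).ofReal_sq_mul_sq_norm_le_setLIntegral_mA hR.le
    _ ≤ ENNReal.ofReal K * ∫⁻ z in ball w R, ENNReal.ofReal ((1 - ‖w‖ ^ 2) ^ α) *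
          ENNReal.ofReal (‖f z‖ ^ 2 * ((α + 1) * (1 - ‖z‖ ^ 2) ^ α) /
            ‖1 - (starRingEnd ℂ) w * z‖ ^ (2 + 2 * α)) ∂mA := by
        rw [← lintegral_const_mul' _ _ ofReal_ne_top]
        gcongr ENNReal.ofReal K * ?_
        refine setLIntegral_mono' measurableSet_ball fun z hz ↦ ?_
        rw [← ofReal_mul (by positivity), ← ofReal_mul hweight]
        gcongr ENNReal.ofReal ?_
        calc (K * R ^ 2)⁻¹ * ‖f z‖ ^ 2
            ≤ (1 - ‖w‖ ^ 2) ^ α * ((α + 1) * (1 - ‖z‖ ^ 2) ^ α /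
              ‖1 - (starRingEnd ℂ) w * z‖ ^ (2 + 2 * α)) * ‖f z‖ ^ 2 := by
              gcongr
              exact le_weighted_kernel_of_mem_ball hα hz
          _ = _ := by ring
    _ ≤ ENNReal.ofReal K * ∫⁻ z in unitDisk, ENNReal.ofReal ((1 - ‖w‖ ^ 2) ^ α) *
          ENNReal.ofReal (‖f z‖ ^ 2 * ((α + 1) * (1 - ‖z‖ ^ 2) ^ α) /
            ‖1 - (starRingEnd ℂ) w * z‖ ^ (2 + 2 * α)) ∂mA := by
        gcongr
    _ = _ := by rw [lintegral_const_mul' _ _ ofReal_ne_top]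

theorem ofReal_rpow_mul_le_of_sq_le {x t p : ℝ} {K Q : ℝ≥0∞} (hx : 0 ≤ x) (hp : 0 ≤ p)
    (h : ENNReal.ofReal (x ^ 2) ≤ K * Q) :
    ENNReal.ofReal (x ^ p * t) ≤ K ^ (p / 2) * (Q ^ (p / 2) * ENNReal.ofReal t) := by
  have hpow : x ^ p = (x ^ 2) ^ (p / 2) := by
    rw [← Real.rpow_natCast, ← Real.rpow_mul hx]
    ring_nf
  rw [ofReal_mul (by positivity), hpow, ← ofReal_rpow_of_nonneg (by positivity) (by positivity),
    ← mul_assoc, ← mul_rpow_of_nonneg _ _ (by positivity)]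
  gcongr

/-- Let `α ≥ 0`, `1 < p < ∞`. If `g ∈ X^p_α` then `g` belongs to the Besov space `B_p`:
`∫_𝔻 |g'(z)|^p (1-|z|²)^{p-2} dA(z) ≤ C ‖g‖_{X^p_α}^p`. -/
theorem stmt10 (α p : ℝ) (hα : 0 ≤ α) (hp : 1 < p) :
    ∃ C : ℝ≥0∞, C ≠ ⊤ ∧ ∀ g : ℂ → ℂ, DifferentiableOn ℂ g unitDisk →
      (∫⁻ z in unitDisk,
          ENNReal.ofReal (‖deriv g z‖ ^ p * (1 - ‖z‖ ^ 2) ^ (p - 2)) ∂mA) ≤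
        C * XnormE p α g := by
  have hp2 : 0 ≤ p / 2 := by linarith
  have hC : ENNReal.ofReal (25 ^ (1 + α)) ^ (p / 2) ≠ ⊤ :=
    rpow_ne_top_of_nonneg hp2 ofReal_ne_top
  refine ⟨_, hC, fun g hg ↦ ?_⟩
  have hg' : DifferentiableOn ℂ (deriv g) unitDisk :=
    (hg.analyticOnNhd isOpen_ball).deriv.differentiableOn
  refine le_trans ?_ (mul_le_mul_right le_add_self _)
  rw [← lintegral_const_mul' _ _ hC]
  exact setLIntegral_mono' measurableSet_ball fun w hw ↦ ofReal_rpow_mul_le_of_sq_le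
    (norm_nonneg _) (by linarith) (hg'.ofReal_sq_norm_le_weighted_lintegral hα hw)
end

section
/- Let 0 ≤ α < γ and 1 < p < ∞. Then X^p_α ⊆ X^p_γ, with ‖g‖_{X^p_γ} ≤ C ‖g‖_{X^p_α}. -/
open MeasureTheory Metric Complex ENNReal

/-! For `z, w ∈ 𝔻` put `D = (1 - |w|²)(1 - |z|²)` and `t = |1 - w̄z|`. Then `D ≤ t²`, and the kernel
of `X^p_β` is `(β + 1) t⁻² (D / t²)^β`. Since `D / t² ≤ 1`, raising `β` from `α` to `γ` can only
shrink `(D / t²)^β`, so the `γ`-kernel is at most `(γ + 1)/(α + 1)` times the `α`-kernel. This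
bound passes through the inner integral, the power `p/2` and the outer integral, giving
`C = ((γ + 1)/(α + 1))^{p/2}`. -/

open ComplexConjugate

lemma norm_one_sub_conj_mul_sq (w z : ℂ) :
    ‖1 - conj w * z‖ ^ 2 = (1 - ‖w‖ ^ 2) * (1 - ‖z‖ ^ 2) + ‖w - z‖ ^ 2 := by
  simp only [Complex.sq_norm, Complex.normSq_apply, Complex.sub_re, Complex.sub_im,
    Complex.mul_re, Complex.mul_im, Complex.conj_re, Complex.conj_im, Complex.one_re,
    Complex.one_im]
  ring

lemma mul_one_sub_sq_le_norm_one_sub_conj_mul_sq (w z : ℂ) :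
    (1 - ‖w‖ ^ 2) * (1 - ‖z‖ ^ 2) ≤ ‖1 - conj w * z‖ ^ 2 := by
  rw [norm_one_sub_conj_mul_sq]
  exact le_add_of_nonneg_right (sq_nonneg _)

lemma rpow_div_rpow_two_add_two_mul_le {t D α γ : ℝ} (ht : 0 < t) (hD : 0 < D)
    (hDt : D ≤ t ^ 2) (hαγ : α ≤ γ) :
    D ^ γ / t ^ (2 + 2 * γ) ≤ D ^ α / t ^ (2 + 2 * α) := by
  have ht2 : 0 < t ^ 2 := by positivity
  have hsplit (β : ℝ) : D ^ β / t ^ (2 + 2 * β) = (D / t ^ 2) ^ β / t ^ 2 := by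
    rw [Real.div_rpow hD.le ht2.le, Real.rpow_add ht, Real.rpow_two, Real.rpow_mul ht.le,
      Real.rpow_two, div_div, mul_comm]
  rw [hsplit, hsplit]
  exact div_le_div_of_nonneg_right
    (Real.rpow_le_rpow_of_exponent_ge (div_pos hD ht2) ((div_le_one ht2).mpr hDt) hαγ) ht2.le

/-- The kernel of `X^p_β`, including the weight `(1 - |w|²)^β` in front of the inner integral. -/
noncomputable def xKernel (β : ℝ) (w z : ℂ) : ℝ :=
  (1 - ‖w‖ ^ 2) ^ β * ((β + 1) * (1 - ‖z‖ ^ 2) ^ β) / ‖1 - conj w * z‖ ^ (2 + 2 * β)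

lemma xKernel_le {α γ : ℝ} (hα : -1 < α) (hαγ : α ≤ γ) {w z : ℂ} (hw : ‖w‖ < 1)
    (hz : ‖z‖ < 1) :
    xKernel γ w z ≤ (γ + 1) / (α + 1) * xKernel α w z := by
  have hA : 0 < 1 - ‖w‖ ^ 2 := by nlinarith [norm_nonneg w]
  have hB : 0 < 1 - ‖z‖ ^ 2 := by nlinarith [norm_nonneg z]
  have hD := mul_pos hA hB
  have hDt := mul_one_sub_sq_le_norm_one_sub_conj_mul_sq w z
  have ht : 0 < ‖1 - conj w * z‖ := by
    refine norm_pos_iff.mpr fun h => ?_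
    rw [h, norm_zero] at hDt
    linarith
  have hfactor (β : ℝ) : xKernel β w z = (β + 1) * ((((1 - ‖w‖ ^ 2) * (1 - ‖z‖ ^ 2)) ^ β) /
      ‖1 - conj w * z‖ ^ (2 + 2 * β)) := by
    rw [xKernel, Real.mul_rpow hA.le hB.le]
    ring
  rw [hfactor, hfactor, ← mul_assoc, div_mul_cancel₀ _ (by linarith)]
  exact mul_le_mul_of_nonneg_left (rpow_div_rpow_two_add_two_mul_le ht hD hDt hαγ)
    (by linarith)

noncomputable def XinnerE (β : ℝ) (g : ℂ → ℂ) (w : ℂ) : ℝ≥0∞ :=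
  ENNReal.ofReal ((1 - ‖w‖ ^ 2) ^ β) *
    ∫⁻ z in unitDisk,
      ENNReal.ofReal (‖deriv g z‖ ^ 2 * ((β + 1) * (1 - ‖z‖ ^ 2) ^ β) /
        ‖1 - conj w * z‖ ^ (2 + 2 * β)) ∂mA

lemma XnormE_eq (p β : ℝ) (g : ℂ → ℂ) :
    XnormE p β g = ENNReal.ofReal (‖g 0‖ ^ p) +
      ∫⁻ w in unitDisk, XinnerE β g w ^ (p / 2) * ENNReal.ofReal ((1 - ‖w‖ ^ 2) ^ (p - 2)) ∂mA :=
  rfl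

lemma XinnerE_eq_lintegral_xKernel (β : ℝ) (g : ℂ → ℂ) {w : ℂ} (hw : ‖w‖ < 1) :
    XinnerE β g w = ∫⁻ z in unitDisk, ENNReal.ofReal (‖deriv g z‖ ^ 2 * xKernel β w z) ∂mA := by
  have hA : 0 ≤ (1 - ‖w‖ ^ 2) ^ β := Real.rpow_nonneg (by nlinarith [norm_nonneg w]) _
  rw [XinnerE, ← lintegral_const_mul' _ _ ENNReal.ofReal_ne_top]
  congr 1 with z
  rw [← ENNReal.ofReal_mul hA, xKernel]
  ring_nf

lemma XinnerE_le {α γ : ℝ} (hα : -1 < α) (hαγ : α ≤ γ) (g : ℂ → ℂ) {w : ℂ} (hw : ‖w‖ < 1) :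
    XinnerE γ g w ≤ ENNReal.ofReal ((γ + 1) / (α + 1)) * XinnerE α g w := by
  have hc : 0 ≤ (γ + 1) / (α + 1) := div_nonneg (by linarith) (by linarith)
  rw [XinnerE_eq_lintegral_xKernel _ _ hw, XinnerE_eq_lintegral_xKernel _ _ hw,
    ← lintegral_const_mul' _ _ ENNReal.ofReal_ne_top]
  refine setLIntegral_mono' measurableSet_ball fun z hz => ?_
  rw [← ENNReal.ofReal_mul hc]
  refine ENNReal.ofReal_le_ofReal ?_
  calc ‖deriv g z‖ ^ 2 * xKernel γ w z
      ≤ ‖deriv g z‖ ^ 2 * ((γ + 1) / (α + 1) * xKernel α w z) :=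
        mul_le_mul_of_nonneg_left (xKernel_le hα hαγ hw (mem_ball_zero_iff.mp hz)) (by positivity)
    _ = (γ + 1) / (α + 1) * (‖deriv g z‖ ^ 2 * xKernel α w z) := by ring

lemma XnormE_le {α γ p : ℝ} (hα : -1 < α) (hαγ : α ≤ γ) (hp : 0 ≤ p) (g : ℂ → ℂ) :
    XnormE p γ g ≤ ENNReal.ofReal ((γ + 1) / (α + 1)) ^ (p / 2) * XnormE p α g := by
  have hp2 : 0 ≤ p / 2 := by linarith
  have hC : 1 ≤ ENNReal.ofReal ((γ + 1) / (α + 1)) ^ (p / 2) := by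
    rw [← ENNReal.one_rpow (p / 2)]
    gcongr
    exact ENNReal.one_le_ofReal.mpr ((one_le_div (by linarith)).mpr (by linarith))
  rw [XnormE_eq, XnormE_eq, mul_add, ← lintegral_const_mul' _ _ (by finiteness)]
  refine add_le_add (le_mul_of_one_le_left zero_le hC) ?_
  refine setLIntegral_mono' measurableSet_ball fun w hw => ?_
  rw [← mul_assoc, ← ENNReal.mul_rpow_of_nonneg _ _ hp2]
  gcongr
  exact XinnerE_le hα hαγ g (mem_ball_zero_iff.mp hw)

/-- Let `0 ≤ α < γ` and `1 < p < ∞`. Then `X^p_α ⊆ X^p_γ`, with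
`‖g‖_{X^p_γ}^p ≤ C ‖g‖_{X^p_α}^p` (i.e. `‖g‖_{X^p_γ} ≤ C^{1/p} ‖g‖_{X^p_α}`). -/
theorem stmt12 (α γ p : ℝ) (hα : 0 ≤ α) (hαγ : α < γ) (hp : 1 < p) :
    ∃ C : ℝ≥0∞, C ≠ ⊤ ∧ ∀ g : ℂ → ℂ, DifferentiableOn ℂ g unitDisk →
      XnormE p γ g ≤ C * XnormE p α g :=
  ⟨_, by finiteness, fun g _ => XnormE_le (by linarith) hαγ.le (by linarith) g⟩
end
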